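/- Let u : ℝⁿ → ℝ be a convex function such that the closure of the gradient image ∇u(ℝⁿ) contains the point (1,…,1) in the interior of its convex hull. Then ∫_{ℝⁿ} e^{−u(y) + y₁ + ⋯ + yₙ} dy < ∞. -/

import Mathlib

open Set MeasureTheory

/-- In a finite-dimensional real normed space, the interior of the closure of a convex
set is contained in the interior of the set. -/
lemma aux_interior_closure_subset {E : Type*} [NormedAddCommGroup E] [NormedSpace ℝ E]
    [FiniteDimensional ℝ E] {s : Set E} (hs : Convex ℝ s) :
    interior (closure s) ⊆ interior s := by
  intro x hx
  have hne : (interior s).Nonempty := by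
    rw [hs.interior_nonempty_iff_affineSpan_eq_top]
    have htop : affineSpan ℝ (closure s) = ⊤ := by
      rw [← (hs.closure).interior_nonempty_iff_affineSpan_eq_top]
      exact ⟨x, hx⟩
    have hsub : closure s ⊆ (affineSpan ℝ s : Set E) :=
      closure_minimal (subset_affineSpan ℝ s) (affineSpan ℝ s).closed_of_finiteDimensional
    have hle : affineSpan ℝ (closure s) ≤ affineSpan ℝ s := affineSpan_le.2 hsub
    rw [htop] at hle
    exact top_le_iff.1 hle
  obtain ⟨y, hy⟩ := hne
  -- find small t > 0 with z := x + t • (x - y) ∈ closure s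
  have hφ : Continuous (fun t : ℝ => x + t • (x - y)) := by continuity
  have hpre : IsOpen ((fun t : ℝ => x + t • (x - y)) ⁻¹' interior (closure s)) :=
    isOpen_interior.preimage hφ
  have h0 : (0 : ℝ) ∈ (fun t : ℝ => x + t • (x - y)) ⁻¹' interior (closure s) := by
    simp [hx]
  obtain ⟨ε, hε, hball⟩ := Metric.isOpen_iff.1 hpre 0 h0
  set t : ℝ := ε / 2 with ht
  have htpos : 0 < t := by positivity
  have hzmem : x + t • (x - y) ∈ closure s := by
    have : t ∈ Metric.ball (0 : ℝ) ε := by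
      simp only [Metric.mem_ball, Real.dist_eq, sub_zero]
      rw [abs_of_pos htpos]
      linarith
    exact interior_subset (hball this)
  set z : E := x + t • (x - y) with hz
  have h1t : (0 : ℝ) < 1 + t := by linarith
  have ha : 0 < t / (1 + t) := by positivity
  have hb : (0 : ℝ) ≤ 1 / (1 + t) := by positivity
  have hab : t / (1 + t) + 1 / (1 + t) = 1 := by
    rw [← add_div, add_comm t 1, div_self (ne_of_gt h1t)]
  have hcombo := hs.combo_interior_closure_mem_interior hy hzmem ha hb hab
  have hxeq : (t / (1 + t)) • y + (1 / (1 + t)) • z = x := by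
    have h1t' : (1 + t) ≠ 0 := ne_of_gt h1t
    rw [hz]
    match_scalars <;> field_simp <;> ring
  rwa [hxeq] at hcombo

/-- Integrability criterion used in the proofs of Theorems C and D: if `u : ℝⁿ → ℝ`
is convex and `(1,…,1)` is an interior point of the closed convex hull of the set of
(sub)gradients of `u`, then `∫_{ℝⁿ} e^{−u(y)+y₁+⋯+yₙ} dy < ∞`. -/
theorem stmt18 {n : ℕ} (u : (Fin n → ℝ) → ℝ) (hconv : ConvexOn ℝ univ u)
    (hgrad : (fun _ : Fin n => (1:ℝ)) ∈
      interior (closure (convexHull ℝ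
        {g : Fin n → ℝ | ∃ x : Fin n → ℝ, ∀ y : Fin n → ℝ,
          u x + ∑ j, g j * (y j - x j) ≤ u y}))) :
    Integrable (fun y : Fin n → ℝ => Real.exp (-u y + ∑ j, y j))
      (volume : Measure (Fin n → ℝ)) := by
  classical
  set S : Set (Fin n → ℝ) := {g : Fin n → ℝ | ∃ x : Fin n → ℝ, ∀ y : Fin n → ℝ,
      u x + ∑ j, g j * (y j - x j) ≤ u y} with hS
  set T : Set (Fin n → ℝ) := {c : Fin n → ℝ | ∃ A : ℝ, ∀ y : Fin n → ℝ,
      A + ∑ j, c j * y j ≤ u y} with hT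
  have hST : S ⊆ T := by
    rintro g ⟨x, hx⟩
    refine ⟨u x - ∑ j, g j * x j, fun y => ?_⟩
    have hsum : ∑ j, g j * (y j - x j) = ∑ j, g j * y j - ∑ j, g j * x j := by
      simp [mul_sub, Finset.sum_sub_distrib]
    have := hx y
    linarith
  have hTconv : Convex ℝ T := by
    rintro c₁ ⟨A₁, h₁⟩ c₂ ⟨A₂, h₂⟩ a b ha hb hab
    refine ⟨a * A₁ + b * A₂, fun y => ?_⟩
    have hsum : ∑ j, (a • c₁ + b • c₂) j * y j
        = a * ∑ j, c₁ j * y j + b * ∑ j, c₂ j * y j := by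
      simp [Finset.mul_sum, add_mul, Finset.sum_add_distrib, mul_assoc]
    have e₁ : a * (A₁ + ∑ j, c₁ j * y j) ≤ a * u y :=
      mul_le_mul_of_nonneg_left (h₁ y) ha
    have e₂ : b * (A₂ + ∑ j, c₂ j * y j) ≤ b * u y :=
      mul_le_mul_of_nonneg_left (h₂ y) hb
    have : a * u y + b * u y = u y := by rw [← add_mul, hab, one_mul]
    rw [hsum]
    nlinarith
  have hCT : convexHull ℝ S ⊆ T := convexHull_min hST hTconv
  have h2 : (fun _ : Fin n => (1:ℝ)) ∈ interior (convexHull ℝ S) :=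
    aux_interior_closure_subset (convex_convexHull ℝ S) hgrad
  obtain ⟨ε, hεpos, hball⟩ := Metric.mem_nhds_iff.1 (mem_interior_iff_mem_nhds.1 h2)
  set δ : ℝ := ε / 2 with hδ
  have hδpos : 0 < δ := by positivity
  -- corners of the cube of radius δ around (1,…,1)
  set c : (Fin n → Bool) → (Fin n → ℝ) :=
    fun s j => 1 + δ * (if s j then 1 else -1) with hc
  have hcT : ∀ s : Fin n → Bool, c s ∈ T := by
    intro s
    apply hCT
    apply hball
    rw [Metric.mem_ball]
    have : dist (c s) (fun _ : Fin n => (1:ℝ)) ≤ δ := by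
      apply dist_pi_le_iff hδpos.le |>.2
      intro j
      simp only [hc, Real.dist_eq, add_sub_cancel_left]
      rcases Bool.eq_false_or_eq_true (s j) with h | h <;>
        simp [h, abs_of_pos hδpos, abs_of_nonneg hδpos.le]
    have hlt : δ < ε := by rw [hδ]; linarith
    exact lt_of_le_of_lt this hlt
  choose A hA using hcT
  have hne : (Finset.univ : Finset (Fin n → Bool)).Nonempty := Finset.univ_nonempty
  set A₀ : ℝ := Finset.univ.inf' hne A with hA₀
  -- key pointwise lower bound on u
  have key : ∀ y : Fin n → ℝ, A₀ + (∑ j, y j) + δ * ∑ j, |y j| ≤ u y := by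
    intro y
    set s : Fin n → Bool := fun j => decide (0 ≤ y j) with hs'
    have h1 := hA s y
    have hsum : ∑ j, c s j * y j = (∑ j, y j) + δ * ∑ j, |y j| := by
      rw [Finset.mul_sum, ← Finset.sum_add_distrib]
      apply Finset.sum_congr rfl
      intro j _
      rcases le_or_gt 0 (y j) with h | h
      · simp [hc, hs', h, abs_of_nonneg h]; ring
      · simp [hc, hs', not_le.2 h, abs_of_neg h]; ring
    have hA₀le : A₀ ≤ A s := Finset.inf'_le _ (Finset.mem_univ s)
    rw [hsum] at h1
    linarith
  -- continuity of u, hence measurability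
  have hcont : Continuous u := by
    rw [← continuousOn_univ]
    exact hconv.continuousOn isOpen_univ
  have hmeas : AEStronglyMeasurable (fun y : Fin n → ℝ => Real.exp (-u y + ∑ j, y j))
      (volume : Measure (Fin n → ℝ)) := by
    apply Continuous.aestronglyMeasurable
    exact Real.continuous_exp.comp ((hcont.neg).add (by continuity))
  -- the dominating integrable function
  have hone : Integrable (fun t : ℝ => Real.exp (-δ * |t|)) (volume : Measure ℝ) := by
    have hIoi : IntegrableOn (fun t : ℝ => Real.exp (-δ * |t|)) (Set.Ioi 0) volume := by
      apply (exp_neg_integrableOn_Ioi 0 hδpos).congr_fun _ measurableSet_Ioi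
      intro t ht
      show Real.exp (-δ * t) = Real.exp (-δ * |t|)
      rw [abs_of_pos (Set.mem_Ioi.1 ht)]
    have hIic : IntegrableOn (fun t : ℝ => Real.exp (-δ * |t|)) (Set.Iic 0) volume := by
      have hmap : Measure.map (fun t : ℝ => -t) volume = volume := Measure.map_neg_eq_self _
      have := (integrableOn_map_equiv (f := fun t : ℝ => Real.exp (-δ * |t|))
        (s := Set.Iic (0:ℝ)) (μ := (volume : Measure ℝ)) (Homeomorph.neg ℝ).toMeasurableEquiv)
      rw [show ((Homeomorph.neg ℝ).toMeasurableEquiv : ℝ → ℝ) = fun t : ℝ => -t from rfl,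
        hmap] at this
      rw [this]
      have hpre : (fun t : ℝ => -t) ⁻¹' Set.Iic 0 = Set.Ici (0:ℝ) := by
        ext t; simp
      rw [hpre]
      have : IntegrableOn (fun t : ℝ => Real.exp (-δ * |t|)) (Set.Ici 0) volume := by
        rw [integrableOn_Ici_iff_integrableOn_Ioi]
        exact hIoi
      apply this.congr_fun _ measurableSet_Ici
      intro t _
      simp [Function.comp, abs_neg]
    have := hIic.union hIoi
    rwa [Set.Iic_union_Ioi, integrableOn_univ] at this
  have hdom : Integrable
      (fun y : Fin n → ℝ => Real.exp (-A₀) * ∏ j, Real.exp (-δ * |y j|))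
      (volume : Measure (Fin n → ℝ)) := by
    exact (Integrable.fintype_prod (f := fun _ : Fin n => fun t : ℝ => Real.exp (-δ * |t|))
      (fun _ => hone)).const_mul _
  apply hdom.mono' hmeas
  filter_upwards with y
  rw [Real.norm_eq_abs, abs_of_pos (Real.exp_pos _)]
  have : (∏ j, Real.exp (-δ * |y j|)) = Real.exp (∑ j, -δ * |y j|) := by
    rw [Real.exp_sum]
  rw [this, ← Real.exp_add]
  apply Real.exp_le_exp.2
  have hk := key y
  have : ∑ j, -δ * |y j| = -(δ * ∑ j, |y j|) := by
    rw [Finset.mul_sum]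
    simp [neg_mul]
  rw [this]
  linarith
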